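/- For any k ≤ 2^n, 2F(k) - 2F(2^n - k) = (2k - 2^n)·n, where F(m) = e(I_{n,m}) is the number of hypercube edges induced by the initial segment of the binary ordering of size m. -/
import Mathlib


open Finset

/-- Number of edges of the hypercube graph `Q_n` with both endpoints in `A`
(ordered pairs counted, then halved). -/
def edgeCount {n : ℕ} (A : Finset (Finset (Fin n))) : ℕ :=
  ((A ×ˢ A).filter (fun p => (symmDiff p.1 p.2).card = 1)).card / 2

/-- Number of edges of `Q_n` with exactly one endpoint in `A` (the edge boundary). -/
def edgeBoundary {n : ℕ} (A : Finset (Finset (Fin n))) : ℕ :=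
  ((A ×ˢ Aᶜ).filter (fun p => (symmDiff p.1 p.2).card = 1)).card

/-- Number of edges of `Q_n` with one endpoint in `X` and the other in `Y`. -/
def edgesBetween {n : ℕ} (X Y : Finset (Finset (Fin n))) : ℕ :=
  ((X ×ˢ Y).filter (fun p => (symmDiff p.1 p.2).card = 1)).card

/-- The antipodal image of a family: pointwise complementation in `[n]`. -/
def barFam {n : ℕ} (A : Finset (Finset (Fin n))) : Finset (Finset (Fin n)) :=
  A.image (fun x => xᶜ)

/-- Pointwise complementation within a ground set `s`. -/
def barOn {n : ℕ} (s : Finset (Fin n)) (A : Finset (Finset (Fin n))) :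
    Finset (Finset (Fin n)) :=
  A.image (fun x => s \ x)

/-- The upper `i`-section of `A`, as a family of subsets of `[n] \ {i}`. -/
def secUp {n : ℕ} (A : Finset (Finset (Fin n))) (i : Fin n) : Finset (Finset (Fin n)) :=
  Finset.univ.filter (fun x => i ∉ x ∧ insert i x ∈ A)

/-- The lower `i`-section of `A`, as a family of subsets of `[n] \ {i}`. -/
def secDown {n : ℕ} (A : Finset (Finset (Fin n))) (i : Fin n) : Finset (Finset (Fin n)) :=
  Finset.univ.filter (fun x => i ∉ x ∧ x ∈ A)

/-- The value of a subset of `[n]` in the binary ordering. -/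
def setToNat {n : ℕ} (x : Finset (Fin n)) : ℕ := ∑ i ∈ x, 2 ^ (i : ℕ)

/-- The initial segment of size `k` of the binary ordering on subsets of `[n]`
(for `k ≤ 2^n`). -/
def iseg (n k : ℕ) : Finset (Finset (Fin n)) :=
  Finset.univ.filter (fun x => setToNat x < k)

/-- `F k`: the number of hypercube edges induced by the initial segment of size `k`
of the binary ordering; equals the sum of binary digit sums of `0, …, k-1`. -/
def binF (k : ℕ) : ℕ := ∑ i ∈ Finset.range k, (Nat.digits 2 i).sum

/-- The subcube of subsets of `[n]` contained in the first `d` coordinates. -/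
def subcube (n d : ℕ) : Finset (Finset (Fin n)) :=
  Finset.univ.filter (fun x => ∀ i ∈ x, (i : ℕ) < d)

lemma dsum_two_mul (m : ℕ) : (Nat.digits 2 (2 * m)).sum = (Nat.digits 2 m).sum := by
  rcases Nat.eq_zero_or_pos m with h | h
  · simp [h]
  · rw [Nat.digits_def' (by norm_num : (1:ℕ) < 2) (by positivity)]
    simp [Nat.mul_div_cancel_left m (by norm_num : 0 < 2)]

lemma dsum_two_mul_add_one (m : ℕ) :
    (Nat.digits 2 (2 * m + 1)).sum = (Nat.digits 2 m).sum + 1 := by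
  rw [Nat.digits_def' (by norm_num : (1:ℕ) < 2) (by positivity)]
  have h1 : (2 * m + 1) % 2 = 1 := by omega
  have h2 : (2 * m + 1) / 2 = m := by omega
  rw [h1, h2]
  simp [Nat.add_comm]

lemma binF_two_mul (m : ℕ) : binF (2 * m) = 2 * binF m + m := by
  induction m with
  | zero => simp [binF]
  | succ m ih =>
    have h1 : 2 * (m + 1) = (2 * m + 1) + 1 := by ring
    rw [h1, binF, Finset.sum_range_succ, Finset.sum_range_succ, ← binF, ih,
      dsum_two_mul, dsum_two_mul_add_one,
      show binF (m + 1) = binF m + (Nat.digits 2 m).sum from by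
        rw [binF, Finset.sum_range_succ]; rfl]
    ring

lemma binF_two_mul_add_one (m : ℕ) :
    binF (2 * m + 1) = binF m + binF (m + 1) + m := by
  rw [binF, Finset.sum_range_succ, ← binF, binF_two_mul, dsum_two_mul]
  rw [show binF (m+1) = binF m + (Nat.digits 2 m).sum from by
    rw [binF, Finset.sum_range_succ, ← binF]]
  ring

theorem stmt8 (n k : ℕ) (hk : k ≤ 2 ^ n) :
    (2 * binF k : ℤ) - 2 * binF (2 ^ n - k) = (2 * k - 2 ^ n) * n := by
  induction n generalizing k with
  | zero =>
    interval_cases k <;> simp [binF]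
  | succ n ih =>
    rcases Nat.even_or_odd k with ⟨m, hm⟩ | ⟨m, hm⟩
    · subst hm
      have hm2 : m ≤ 2 ^ n := by
        have : 2 ^ (n+1) = 2 * 2 ^ n := by ring
        omega
      have hsub : 2 ^ (n + 1) - (m + m) = 2 * (2 ^ n - m) := by
        have : 2 ^ (n+1) = 2 * 2 ^ n := by ring
        omega
      have ih1 := ih m hm2
      rw [hsub, show m + m = 2 * m from by ring, binF_two_mul, binF_two_mul]
      have hc : ((2 ^ n - m : ℕ) : ℤ) = 2 ^ n - m := by
        push_cast [Nat.cast_sub hm2]; ring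
      push_cast [hc] at *
      linear_combination (2:ℤ) * ih1
    · subst hm
      have hm2 : m + 1 ≤ 2 ^ n := by
        have : 2 ^ (n+1) = 2 * 2 ^ n := by ring
        omega
      have hsub : 2 ^ (n + 1) - (2 * m + 1) = 2 * (2 ^ n - (m + 1)) + 1 := by
        have : 2 ^ (n+1) = 2 * 2 ^ n := by ring
        omega
      have ih1 := ih m (by omega)
      have ih2 := ih (m + 1) hm2
      rw [hsub, binF_two_mul_add_one, binF_two_mul_add_one]
      have hc1 : ((2 ^ n - m : ℕ) : ℤ) = 2 ^ n - m := by
        push_cast [Nat.cast_sub (by omega : m ≤ 2 ^ n)]; ring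
      have hc2 : ((2 ^ n - (m + 1) : ℕ) : ℤ) = 2 ^ n - (m + 1) := by
        push_cast [Nat.cast_sub hm2]; ring
      have hc3 : 2 ^ n - (m + 1) + 1 = 2 ^ n - m := by omega
      rw [hc3]
      push_cast [hc1, hc2] at *
      linear_combination ih1 + ih2
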